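/- Let (a_n) be a sequence of nonzero complex numbers with |a_n| → ∞, and let (p_n) be a sequence of natural numbers such that for every r > 0 the series ∑_n (r/|a_n|)^(p_n+1) converges. Then the infinite product Π(z) = ∏_{n=1}^∞ E_{p_n}(z/a_n) converges locally uniformly on ℂ to an entire function whose zero set is exactly {a_n : n ∈ ℕ}. -/

import Mathlib

open Complex Filter

noncomputable def weierstrassE (p : ℕ) (z : ℂ) : ℂ :=
  (1 - z) * Complex.exp (∑ k ∈ Finset.Icc 1 p, z ^ k / (k : ℂ))

/-!
Since `E_p'(z) = -z^p exp(z + ⋯ + z^p/p)`, the mean value inequality gives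
`‖E_p(w) - 1‖ ≤ 3‖w‖^(p+1)` for `‖w‖ ≤ 1/2`. On the disc `‖z‖ ≤ r`, once `‖a_n‖ ≥ 2r`, the
factor `E_{p_n}(z/a_n)` is therefore within `3(r/‖a_n‖)^(p_n+1)` of `1`, a summable bound, so the
product converges uniformly there and its limit is entire. An absolutely convergent product
`∏ (1 + u_n)` vanishes only where one of its factors does, and `E_p(w) = 0` exactly at `w = 1`.
-/

open Metric

lemma weierstrassE_eq_zero_iff {p : ℕ} {z : ℂ} : weierstrassE p z = 0 ↔ z = 1 := by
  simp [weierstrassE, sub_eq_zero, eq_comm (a := (1 : ℂ))]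

@[fun_prop]
lemma differentiable_weierstrassE (p : ℕ) : Differentiable ℂ (weierstrassE p) := by
  unfold weierstrassE
  fun_prop

@[simp]
lemma weierstrassE_zero (p : ℕ) : weierstrassE p 0 = 1 := by
  rw [weierstrassE, Finset.sum_eq_zero fun k hk ↦ ?_]
  · simp
  · have : k ≠ 0 := by grind
    simp [this]

lemma hasDerivAt_sum_Icc_pow_div (p : ℕ) (z : ℂ) :
    HasDerivAt (fun z ↦ ∑ k ∈ Finset.Icc 1 p, z ^ k / (k : ℂ))
      (∑ i ∈ Finset.range p, z ^ i) z := by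
  refine (HasDerivAt.fun_sum fun k _ ↦ (hasDerivAt_pow k z).div_const (k : ℂ)).congr_deriv ?_
  rw [← Finset.Ico_add_one_right_eq_Icc, Finset.sum_Ico_eq_sum_range, add_tsub_cancel_right]
  refine Finset.sum_congr rfl fun i _ ↦ ?_
  rw [add_tsub_cancel_left, mul_div_cancel_left₀ _ (by norm_cast; omega)]

lemma hasDerivAt_weierstrassE (p : ℕ) (z : ℂ) :
    HasDerivAt (weierstrassE p) (-(z ^ p * exp (∑ k ∈ Finset.Icc 1 p, z ^ k / (k : ℂ)))) z := by
  refine (((hasDerivAt_id' z).const_sub 1).mul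
    (hasDerivAt_sum_Icc_pow_div p z).cexp).congr_deriv ?_
  linear_combination (exp (∑ k ∈ Finset.Icc 1 p, z ^ k / (k : ℂ))) * mul_neg_geom_sum z p

lemma norm_sum_Icc_pow_div_le_one {p : ℕ} {z : ℂ} (hz : ‖z‖ ≤ 1 / 2) :
    ‖∑ k ∈ Finset.Icc 1 p, z ^ k / (k : ℂ)‖ ≤ 1 := calc
  _ ≤ ∑ k ∈ Finset.Icc 1 p, ‖z‖ ^ k := by
    refine (norm_sum_le _ _).trans (Finset.sum_le_sum fun k hk ↦ ?_)
    rw [norm_div, norm_pow, Complex.norm_natCast]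
    exact div_le_self (by positivity) (by exact_mod_cast (Finset.mem_Icc.1 hk).1)
  _ ≤ ‖z‖ ^ 1 / (1 - ‖z‖) := by
    rw [← Finset.Ico_add_one_right_eq_Icc]
    exact geom_sum_Ico_le_of_lt_one (norm_nonneg z) (by linarith)
  _ ≤ 1 := by rw [pow_one, div_le_one (by linarith)]; linarith

lemma norm_deriv_weierstrassE_le {p : ℕ} {z : ℂ} (hz : ‖z‖ ≤ 1 / 2) :
    ‖-(z ^ p * exp (∑ k ∈ Finset.Icc 1 p, z ^ k / (k : ℂ)))‖ ≤ 3 * ‖z‖ ^ p := by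
  have hexp : ‖exp (∑ k ∈ Finset.Icc 1 p, z ^ k / (k : ℂ))‖ ≤ 3 := calc
    _ ≤ Real.exp 1 :=
      (norm_exp_le_exp_norm _).trans (Real.exp_le_exp.2 (norm_sum_Icc_pow_div_le_one hz))
    _ ≤ 3 := Real.exp_one_lt_d9.le.trans (by norm_num)
  rw [norm_neg, norm_mul, norm_pow, mul_comm]
  gcongr

lemma norm_weierstrassE_sub_one_le {p : ℕ} {w : ℂ} (hw : ‖w‖ ≤ 1 / 2) :
    ‖weierstrassE p w - 1‖ ≤ 3 * ‖w‖ ^ (p + 1) := by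
  have hball : ∀ z ∈ closedBall (0 : ℂ) ‖w‖,
      ‖-(z ^ p * exp (∑ k ∈ Finset.Icc 1 p, z ^ k / (k : ℂ)))‖ ≤ 3 * ‖w‖ ^ p := fun z hz ↦ by
    rw [mem_closedBall_zero_iff] at hz
    exact (norm_deriv_weierstrassE_le (hz.trans hw)).trans (by gcongr)
  have := (convex_closedBall (0 : ℂ) ‖w‖).norm_image_sub_le_of_norm_hasDerivWithin_le
    (fun z _ ↦ (hasDerivAt_weierstrassE p z).hasDerivWithinAt) hball
    (x := 0) (y := w) (mem_closedBall_self (norm_nonneg w)) (by simp)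
  simpa [pow_succ, mul_assoc] using this

lemma norm_weierstrassE_div_sub_one_le {p : ℕ} {a z : ℂ} {r : ℝ} (hz : ‖z‖ ≤ r)
    (hr : 2 * r ≤ ‖a‖) : ‖weierstrassE p (z / a) - 1‖ ≤ 3 * (r / ‖a‖) ^ (p + 1) := by
  have hza : ‖z / a‖ ≤ r / ‖a‖ := by
    rw [norm_div]
    exact div_le_div_of_nonneg_right hz (norm_nonneg a)
  have hra : r / ‖a‖ ≤ 1 / 2 := by
    rcases (norm_nonneg a).eq_or_lt with h | h
    · simp [← h]
    · rw [div_le_iff₀ h]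
      linarith
  exact (norm_weierstrassE_sub_one_le (hza.trans hra)).trans (by gcongr)

lemma tprod_eq_zero_iff_of_summable_norm_sub_one {ι R : Type*} [NormedCommRing R]
    [NormOneClass R] [NormMulClass R] [CompleteSpace R] {f : ι → R}
    (hf : Summable fun i ↦ ‖f i - 1‖) : ∏' i, f i = 0 ↔ ∃ i, f i = 0 := by
  refine ⟨fun h ↦ ?_, tprod_of_exists_eq_zero⟩
  by_contra! hne
  exact tprod_one_add_ne_zero_of_summable (f := (f · - 1)) (by simpa using hne) hf (by simpa)

section Product

variable {a : ℕ → ℂ} {p : ℕ → ℕ}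

lemma eventually_norm_weierstrassE_div_sub_one_le (ha : Tendsto (fun n ↦ ‖a n‖) atTop atTop)
    (r : ℝ) : ∀ᶠ n in atTop, ∀ z ∈ closedBall (0 : ℂ) r,
      ‖weierstrassE (p n) (z / a n) - 1‖ ≤ 3 * (r / ‖a n‖) ^ (p n + 1) := by
  filter_upwards [ha.eventually_ge_atTop (2 * r)] with n hn z hz
  exact norm_weierstrassE_div_sub_one_le (mem_closedBall_zero_iff.1 hz) hn

lemma hasProdUniformlyOn_weierstrassE_closedBall (ha : Tendsto (fun n ↦ ‖a n‖) atTop atTop)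
    {r : ℝ} (hp : Summable fun n ↦ (r / ‖a n‖) ^ (p n + 1)) :
    HasProdUniformlyOn (fun n z ↦ weierstrassE (p n) (z / a n))
      (fun z ↦ ∏' n, weierstrassE (p n) (z / a n)) (closedBall 0 r) := by
  simpa using Summable.hasProdUniformlyOn_nat_one_add (isCompact_closedBall 0 r)
    (hp.mul_left 3) (eventually_norm_weierstrassE_div_sub_one_le ha r)
    fun n ↦ (by fun_prop : Differentiable ℂ fun z ↦ weierstrassE (p n) (z / a n) - 1)
      |>.continuous.continuousOn

lemma hasProdLocallyUniformlyOn_univ_weierstrassE (ha : Tendsto (fun n ↦ ‖a n‖) atTop atTop)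
    (hp : ∀ r : ℝ, 0 < r → Summable fun n ↦ (r / ‖a n‖) ^ (p n + 1)) :
    HasProdLocallyUniformlyOn (fun n z ↦ weierstrassE (p n) (z / a n))
      (fun z ↦ ∏' n, weierstrassE (p n) (z / a n)) Set.univ := by
  refine hasProdLocallyUniformlyOn_of_of_forall_exists_nhds fun z _ ↦ ⟨closedBall 0 (‖z‖ + 1),
    nhdsWithin_le_nhds (closedBall_mem_nhds_of_mem (by simp)),
    hasProdUniformlyOn_weierstrassE_closedBall ha (hp _ (by positivity))⟩

lemma summable_norm_weierstrassE_div_sub_one (ha : Tendsto (fun n ↦ ‖a n‖) atTop atTop)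
    (hp : ∀ r : ℝ, 0 < r → Summable fun n ↦ (r / ‖a n‖) ^ (p n + 1)) (z : ℂ) :
    Summable fun n ↦ ‖weierstrassE (p n) (z / a n) - 1‖ := by
  refine ((hp (‖z‖ + 1) (by positivity)).mul_left 3).of_norm_bounded_eventually_nat ?_
  filter_upwards [eventually_norm_weierstrassE_div_sub_one_le ha (‖z‖ + 1)] with n hn
  simpa using hn z (by simp)

end Product

theorem weierstrass_product_entire
    (a : ℕ → ℂ) (ha : ∀ n, a n ≠ 0)
    (ha' : Tendsto (fun n => ‖a n‖) atTop atTop)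
    (p : ℕ → ℕ)
    (hp : ∀ r : ℝ, 0 < r → Summable (fun n => (r / ‖a n‖) ^ (p n + 1))) :
    ∃ f : ℂ → ℂ, Differentiable ℂ f ∧
      TendstoLocallyUniformly
        (fun N z => ∏ n ∈ Finset.range N, weierstrassE (p n) (z / a n)) f atTop ∧
      ∀ z : ℂ, f z = 0 ↔ ∃ n, z = a n := by
  have hlim :=
    (hasProdLocallyUniformlyOn_univ_weierstrassE ha' hp).tendstoLocallyUniformlyOn_finsetRange
  refine ⟨_, ?_, tendstoLocallyUniformlyOn_univ.1 hlim, fun z ↦ ?_⟩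
  · exact differentiableOn_univ.1 <|
      hlim.differentiableOn (.of_forall fun N ↦ by fun_prop) isOpen_univ
  · rw [tprod_eq_zero_iff_of_summable_norm_sub_one
      (summable_norm_weierstrassE_div_sub_one ha' hp z)]
    simp only [weierstrassE_eq_zero_iff, div_eq_one_iff_eq (ha _)]
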